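/- Let η: ℝ → ℂ satisfy Re η ≤ 0, η(u) ≠ 0 for u ≠ 0, and 1/|η| integrable on {|u| ≥ c} for all c > 0. Then lim_{q↓0} ∫_ℝ |q/(q - η(u))| du = 0. -/

import Mathlib

/-!
Since `Re η ≤ 0`, the denominator satisfies `|q - η(u)| ≥ q` and `|q - η(u)| ≥ |η(u)|`, so for
`0 < q ≤ 1` the integrand is bounded by `min 1 (1 / |η(u)|)`. This bound is integrable: it is at
most `1` on `[-1, 1]` and at most `1 / |η|` on `{|u| ≥ 1}`. The integrand tends to `0` at every
`u ≠ 0`, so dominated convergence concludes.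
-/

open MeasureTheory Filter Topology

namespace Complex

variable {q : ℝ} {z : ℂ}

lemma le_norm_ofReal_sub_of_re_nonpos (hz : z.re ≤ 0) : q ≤ ‖(q : ℂ) - z‖ :=
  calc q ≤ ((q : ℂ) - z).re := by simp only [sub_re, ofReal_re]; linarith
    _ ≤ ‖(q : ℂ) - z‖ := re_le_norm _

lemma norm_le_norm_ofReal_sub_of_re_nonpos (hq : 0 ≤ q) (hz : z.re ≤ 0) :
    ‖z‖ ≤ ‖(q : ℂ) - z‖ := by
  have hsq : normSq z ≤ normSq ((q : ℂ) - z) := by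
    simp only [normSq_apply, sub_re, sub_im, ofReal_re, ofReal_im]
    nlinarith
  simpa only [norm_def] using Real.sqrt_le_sqrt hsq

lemma norm_ofReal_div_ofReal_sub_le_min (hq₀ : 0 < q) (hq₁ : q ≤ 1) (hz : z.re ≤ 0)
    (hz₀ : z ≠ 0) : ‖(q : ℂ) / ((q : ℂ) - z)‖ ≤ min 1 (1 / ‖z‖) := by
  have hq : ‖(q : ℂ)‖ = q := by simp [hq₀.le]
  have hden : 0 < ‖(q : ℂ) - z‖ := hq₀.trans_le (le_norm_ofReal_sub_of_re_nonpos hz)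
  rw [norm_div, hq]
  refine le_min ((div_le_one hden).2 (le_norm_ofReal_sub_of_re_nonpos hz)) ?_
  rw [div_le_div_iff₀ hden (norm_pos_iff.2 hz₀), one_mul]
  calc q * ‖z‖ ≤ ‖z‖ := mul_le_of_le_one_left (norm_nonneg _) hq₁
    _ ≤ ‖(q : ℂ) - z‖ := norm_le_norm_ofReal_sub_of_re_nonpos hq₀.le hz

lemma tendsto_norm_ofReal_div_ofReal_sub (hz : z ≠ 0) :
    Tendsto (fun q : ℝ => ‖(q : ℂ) / ((q : ℂ) - z)‖) (𝓝 0) (𝓝 0) := by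
  have hcont : Continuous fun q : ℝ => (q : ℂ) := continuous_ofReal
  simpa using ((hcont.tendsto 0).div ((hcont.tendsto 0).sub tendsto_const_nhds)
    (by simpa using hz)).norm

end Complex

lemma integrable_min_one_of_integrableOn_one_le_abs {g : ℝ → ℝ} (hg₀ : ∀ u, 0 ≤ g u)
    (hg : AEStronglyMeasurable g) (hint : IntegrableOn g {u | 1 ≤ |u|}) :
    Integrable fun u => min 1 (g u) := by
  have hmeas : AEStronglyMeasurable (fun u => min 1 (g u)) :=
    aestronglyMeasurable_const.inf hg
  have hnorm : ∀ u, ‖min 1 (g u)‖ = min 1 (g u) := fun u =>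
    Real.norm_of_nonneg (le_min zero_le_one (hg₀ u))
  have hsmall : IntegrableOn (fun u => min 1 (g u)) (Set.Icc (-1) 1) :=
    Measure.integrableOn_of_bounded (M := 1) measure_Icc_lt_top.ne hmeas
      (ae_of_all _ fun u => (hnorm u).trans_le (min_le_left _ _))
  have hlarge : IntegrableOn (fun u => min 1 (g u)) {u | 1 ≤ |u|} :=
    hint.mono' hmeas.restrict (ae_of_all _ fun u => (hnorm u).trans_le (min_le_right _ _))
  have hcover : Set.Icc (-1) 1 ∪ {u : ℝ | 1 ≤ |u|} = Set.univ := by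
    ext u
    simpa [← abs_le] using le_total |u| 1
  simpa [hcover] using hsmall.union hlarge

theorem stmt_10 (η : ℝ → ℂ) (hmeas : Measurable η)
    (hre : ∀ u : ℝ, (η u).re ≤ 0)
    (hne : ∀ u : ℝ, u ≠ 0 → η u ≠ 0)
    (hint : ∀ c : ℝ, 0 < c → IntegrableOn (fun u : ℝ => 1 / ‖η u‖) {u : ℝ | c ≤ |u|}) :
    Tendsto (fun q : ℝ => ∫ u : ℝ, ‖(q : ℂ) / ((q : ℂ) - η u)‖)
      (nhdsWithin 0 (Set.Ioi 0)) (nhds 0) := by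
  have hbound : Integrable fun u => min 1 (1 / ‖η u‖) :=
    integrable_min_one_of_integrableOn_one_le_abs (fun u => by positivity)
      (measurable_const.div hmeas.norm).aestronglyMeasurable (hint 1 one_pos)
  have hF_meas : ∀ q : ℝ, AEStronglyMeasurable fun u => ‖(q : ℂ) / ((q : ℂ) - η u)‖ :=
    fun q => (measurable_const.div (measurable_const.sub hmeas)).norm.aestronglyMeasurable
  have hdom : ∀ᶠ q : ℝ in 𝓝[>] 0,
      ∀ᵐ u, ‖(‖(q : ℂ) / ((q : ℂ) - η u)‖)‖ ≤ min 1 (1 / ‖η u‖) := by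
    filter_upwards [Ioo_mem_nhdsGT one_pos] with q hq
    filter_upwards [Measure.ae_ne volume 0] with u hu
    rw [Real.norm_of_nonneg (norm_nonneg _)]
    exact Complex.norm_ofReal_div_ofReal_sub_le_min hq.1 hq.2.le (hre u) (hne u hu)
  have hlim :
      ∀ᵐ u, Tendsto (fun q : ℝ => ‖(q : ℂ) / ((q : ℂ) - η u)‖) (𝓝[>] 0) (𝓝 0) := by
    filter_upwards [Measure.ae_ne volume 0] with u hu
    exact (Complex.tendsto_norm_ofReal_div_ofReal_sub (hne u hu)).mono_left nhdsWithin_le_nhds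
  simpa only [integral_zero] using
    tendsto_integral_filter_of_dominated_convergence _ (.of_forall hF_meas) hdom hbound hlim
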